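/- Let A be an n×d real matrix of rank ρ, let k < ρ, let A_k = U_kΣ_kV_kᵀ be the truncated SVD of A with A_{ρ−k} = A − A_k, and let R be a d×t real matrix such that V_kᵀR has rank k. Define E = A_k − AR(V_kᵀR)⁺V_kᵀ. Then ‖E‖_F ≤ ‖A_{ρ−k}RRᵀV_k‖_F + ‖A_{ρ−k}R‖_F · ‖(V_kᵀR)⁺ − (V_kᵀR)ᵀ‖₂. -/

import Mathlib

open MeasureTheory
open scoped Matrix

/-- Frobenius norm of a real matrix. -/
noncomputable def frobNorm {m n : ℕ} (M : Matrix (Fin m) (Fin n) ℝ) : ℝ :=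
  Real.sqrt (∑ i, ∑ j, (M i j) ^ 2)

/-- Spectral (operator) norm of a real matrix, viewed as a linear map between
Euclidean spaces. -/
noncomputable def specNorm {m n : ℕ} (M : Matrix (Fin m) (Fin n) ℝ) : ℝ :=
  ‖LinearMap.toContinuousLinearMap (Matrix.toEuclideanLin M)‖

/-- `P` is the Moore–Penrose pseudoinverse of `M` (the four Penrose conditions;
such a `P` is unique). -/
def IsMoorePenrose {m n : ℕ} (M : Matrix (Fin m) (Fin n) ℝ)
    (P : Matrix (Fin n) (Fin m) ℝ) : Prop :=
  M * P * M = M ∧ P * M * P = P ∧ (M * P)ᵀ = M * P ∧ (P * M)ᵀ = P * M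

/-- `X` is an `n × k` cluster indicator matrix: each row `i` has a single nonzero
entry, in column `f i`, equal to `1/√(z_{f i})` where `z_j` is the number of rows
assigned to column `j`. -/
def IsIndicator {n k : ℕ} (X : Matrix (Fin n) (Fin k) ℝ) : Prop :=
  ∃ f : Fin n → Fin k, ∀ i j, X i j =
    if f i = j then 1 / Real.sqrt ((Finset.univ.filter fun i' => f i' = j).card) else 0

/-- The singular values of a `k × t` real matrix `M` (in some order): the square
roots of the eigenvalues of `M * Mᵀ`. -/
noncomputable def singVals {k t : ℕ} (M : Matrix (Fin k) (Fin t) ℝ) (i : Fin k) : ℝ :=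
  Real.sqrt ((Matrix.isHermitian_mul_conjTranspose_self M).eigenvalues i)

/-- The `d × t` random sign matrix with entries `±1/√t`, as a function of the
sample point `ω` (a `d × t` array of fair coins). -/
noncomputable def signMatrix (d t : ℕ) (ω : Fin d → Fin t → Bool) :
    Matrix (Fin d) (Fin t) ℝ :=
  Matrix.of fun i j => (if ω i j then (1 : ℝ) else -1) / Real.sqrt t

/-- The law of a `d × t` matrix of i.i.d. fair signs: the uniform probability
measure on all `d × t` sign patterns. -/
noncomputable def signMeasure (d t : ℕ) : Measure (Fin d → Fin t → Bool) :=
  (PMF.uniformOfFintype (Fin d → Fin t → Bool)).toMeasure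

/-!
Since `A_k = U_k Σ_k V_kᵀ` and `V_kᵀ V_k = I`, we have `A_k V_k V_kᵀ = A_k`. As `B = V_kᵀ R` has
full row rank, the Penrose identity `B P B = B` forces `B P = I`; hence `A_k R P V_kᵀ = A_k` and
`E = -A_{ρ-k} R P V_kᵀ`. Writing `P = Bᵀ + (P - Bᵀ)` splits `E` into two terms. Right
multiplication by `V_kᵀ` preserves the Frobenius norm, and `‖X Y‖_F ≤ ‖X‖_F ‖Y‖₂` bounds the
second term.
-/

section FrobeniusNorm

variable {m n p : ℕ}

theorem frobNorm_nonneg (M : Matrix (Fin m) (Fin n) ℝ) : 0 ≤ frobNorm M :=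
  Real.sqrt_nonneg _

theorem frobNorm_sq (M : Matrix (Fin m) (Fin n) ℝ) : frobNorm M ^ 2 = ∑ i, ∑ j, M i j ^ 2 :=
  Real.sq_sqrt (by positivity)

open scoped Matrix.Norms.Frobenius in
theorem frobNorm_eq_norm (M : Matrix (Fin m) (Fin n) ℝ) : frobNorm M = ‖M‖ := by
  rw [Matrix.frobenius_norm_def, frobNorm, Real.sqrt_eq_rpow]
  simp [Real.norm_eq_abs]

open scoped Matrix.Norms.Frobenius in
theorem frobNorm_add_le (M N : Matrix (Fin m) (Fin n) ℝ) :
    frobNorm (M + N) ≤ frobNorm M + frobNorm N := by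
  simpa only [frobNorm_eq_norm] using norm_add_le M N

open scoped Matrix.Norms.Frobenius in
@[simp] theorem frobNorm_neg (M : Matrix (Fin m) (Fin n) ℝ) : frobNorm (-M) = frobNorm M := by
  simp only [frobNorm_eq_norm, norm_neg]

open scoped Matrix.Norms.Frobenius in
@[simp] theorem frobNorm_transpose (M : Matrix (Fin m) (Fin n) ℝ) : frobNorm Mᵀ = frobNorm M := by
  simp only [frobNorm_eq_norm, Matrix.frobenius_norm_transpose]

theorem frobNorm_eq_sqrt_trace (M : Matrix (Fin m) (Fin n) ℝ) :
    frobNorm M = Real.sqrt (M * Mᵀ).trace := by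
  simp [frobNorm, Matrix.trace, Matrix.mul_apply, sq]

theorem frobNorm_mul_transpose_of_transpose_mul_self (M : Matrix (Fin m) (Fin n) ℝ)
    {V : Matrix (Fin p) (Fin n) ℝ} (hV : Vᵀ * V = 1) : frobNorm (M * Vᵀ) = frobNorm M := by
  rw [frobNorm_eq_sqrt_trace, frobNorm_eq_sqrt_trace, Matrix.transpose_mul,
    Matrix.transpose_transpose, Matrix.mul_assoc, ← Matrix.mul_assoc Vᵀ, hV, Matrix.one_mul]

theorem specNorm_nonneg (M : Matrix (Fin m) (Fin n) ℝ) : 0 ≤ specNorm M :=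
  norm_nonneg _

theorem specNorm_transpose (M : Matrix (Fin m) (Fin n) ℝ) : specNorm Mᵀ = specNorm M := by
  rw [specNorm, specNorm, ← Matrix.conjTranspose_eq_transpose_of_trivial,
    Matrix.toEuclideanLin_conjTranspose_eq_adjoint, LinearMap.adjoint_toContinuousLinearMap]
  exact ContinuousLinearMap.adjoint.norm_map _

theorem frobNorm_mul_le_specNorm_mul (C : Matrix (Fin m) (Fin n) ℝ)
    (X : Matrix (Fin n) (Fin p) ℝ) : frobNorm (C * X) ≤ specNorm C * frobNorm X := by
  have hcol (j : Fin p) : ∑ i, (C * X) i j ^ 2 ≤ specNorm C ^ 2 * ∑ l, X l j ^ 2 := by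
    have h := pow_le_pow_left₀ (norm_nonneg _)
      ((LinearMap.toContinuousLinearMap (Matrix.toEuclideanLin C)).le_opNorm
        (WithLp.toLp 2 fun l => X l j)) 2
    simpa [specNorm, mul_pow, EuclideanSpace.norm_sq_eq, Matrix.mul_apply, Matrix.mulVec,
      dotProduct] using h
  rw [← pow_le_pow_iff_left₀ (frobNorm_nonneg _)
    (mul_nonneg (specNorm_nonneg _) (frobNorm_nonneg _)) two_ne_zero, mul_pow, frobNorm_sq,
    frobNorm_sq, Finset.sum_comm, Finset.sum_comm (f := fun i j => X i j ^ 2), Finset.mul_sum]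
  exact Finset.sum_le_sum fun j _ => hcol j

theorem frobNorm_mul_le_mul_specNorm (X : Matrix (Fin m) (Fin n) ℝ)
    (C : Matrix (Fin n) (Fin p) ℝ) : frobNorm (X * C) ≤ frobNorm X * specNorm C := by
  rw [← frobNorm_transpose, Matrix.transpose_mul, mul_comm, ← frobNorm_transpose X,
    ← specNorm_transpose C]
  exact frobNorm_mul_le_specNorm_mul _ _

end FrobeniusNorm

namespace Matrix

variable {α : Type*} [CommRing α] {ι κ m n d k t : Type*}

theorem mul_transpose_eq_submatrix_mul_transpose_submatrix [Fintype ι] [Fintype κ]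
    {c : ι → κ} (hc : Function.Injective c) (M : Matrix m κ α) (W : Matrix n κ α)
    (hM : ∀ i j, j ∉ Set.range c → M i j = 0) :
    M * Wᵀ = M.submatrix id c * (W.submatrix id c)ᵀ := by
  ext i b
  exact (Fintype.sum_of_injective c hc _ _ (fun j hj => by simp [hM i j hj]) fun _ => rfl).symm

theorem transpose_submatrix_mul_submatrix_eq_one [Fintype m] [DecidableEq ι] [DecidableEq n]
    {W : Matrix m n α} (hW : Wᵀ * W = 1) {c : ι → n} (hc : Function.Injective c) :
    (W.submatrix id c)ᵀ * W.submatrix id c = 1 := by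
  rw [transpose_submatrix, ← submatrix_mul _ _ _ _ _ Function.bijective_id, hW, submatrix_one _ hc]

theorem sub_mul_mul_mul_transpose_eq_of_mul_eq_one [Fintype d] [Fintype k] [Fintype t]
    [DecidableEq k] (A Ak : Matrix m d α) (V : Matrix d k α) (R : Matrix d t α) (P : Matrix t k α)
    (hAk : Ak * V * Vᵀ = Ak) (hP : Vᵀ * R * P = 1) :
    Ak - A * R * P * Vᵀ =
      -((A - Ak) * R * Rᵀ * V * Vᵀ + (A - Ak) * R * (P - (Vᵀ * R)ᵀ) * Vᵀ) := by
  have hAkRP : Ak * R * P * Vᵀ = Ak :=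
    calc Ak * R * P * Vᵀ = Ak * V * Vᵀ * R * P * Vᵀ := by rw [hAk]
      _ = Ak * V * (Vᵀ * R * P) * Vᵀ := by simp only [Matrix.mul_assoc]
      _ = Ak := by rw [hP, Matrix.mul_one, hAk]
  rw [transpose_mul, transpose_transpose]
  simp only [Matrix.sub_mul, Matrix.mul_sub, Matrix.mul_assoc] at hAkRP ⊢
  rw [hAkRP]
  abel

theorem mul_eq_one_of_mul_mul_self_of_rank_eq_card {K : Type*} [Field K] [Fintype m]
    [DecidableEq m] [Fintype n] (B : Matrix m n K) (P : Matrix n m K)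
    (hB : B.rank = Fintype.card m) (h : B * P * B = B) : B * P = 1 := by
  have hsurj : Function.Surjective B.mulVecLin := by
    rw [← LinearMap.range_eq_top]
    exact Submodule.eq_top_of_finrank_eq
      (by rw [← Matrix.rank, hB, Module.finrank_fintype_fun_eq_card])
  have hlin : (B * P).mulVecLin = (1 : Matrix m m K).mulVecLin := by
    rw [← LinearMap.cancel_right hsurj, ← mulVecLin_mul, h, mulVecLin_one, LinearMap.id_comp]
  exact Matrix.toLin'.injective hlin

end Matrix

/-- bound on ‖E‖_F = ‖A_k − AR(V_kᵀR)⁺V_kᵀ‖_F. -/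
theorem statement13 (n d k ρ t : ℕ) (hkρ : k < ρ) (hρd : ρ ≤ d)
    (A : Matrix (Fin n) (Fin d) ℝ)
    (U : Matrix (Fin n) (Fin n) ℝ) (W : Matrix (Fin d) (Fin d) ℝ) (σ : ℕ → ℝ)
    (hW : Wᵀ * W = 1)
    (Ak : Matrix (Fin n) (Fin d) ℝ)
    (hAk : Ak = U * (Matrix.of fun (i : Fin n) (j : Fin d) =>
      if (i : ℕ) = (j : ℕ) ∧ (i : ℕ) < k then σ i else 0) * Wᵀ)
    (Vk : Matrix (Fin d) (Fin k) ℝ)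
    (hVk : Vk = W.submatrix id (Fin.castLE (by omega)))
    (R : Matrix (Fin d) (Fin t) ℝ)
    (hrank : (Vkᵀ * R).rank = k)
    (P : Matrix (Fin t) (Fin k) ℝ) (hP : IsMoorePenrose (Vkᵀ * R) P) :
    frobNorm (Ak - A * R * P * Vkᵀ) ≤
      frobNorm ((A - Ak) * R * Rᵀ * Vk) +
        frobNorm ((A - Ak) * R) * specNorm (P - (Vkᵀ * R)ᵀ) := by
  have hkd : k ≤ d := hkρ.le.trans hρd
  have hc : Function.Injective (Fin.castLE hkd) := Fin.castLE_injective hkd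
  have hVV : Vkᵀ * Vk = 1 := by
    rw [hVk]
    exact Matrix.transpose_submatrix_mul_submatrix_eq_one hW hc
  have hAkV : Ak * Vk * Vkᵀ = Ak := by
    -- `M = U_k Σ_k`: the columns of the truncated `Σ` beyond the `k`-th vanish.
    obtain ⟨M, hM⟩ : ∃ M : Matrix (Fin n) (Fin k) ℝ, Ak = M * Vkᵀ := by
      refine ⟨U * (Matrix.of fun (i : Fin n) (j : Fin d) =>
        if (i : ℕ) = (j : ℕ) ∧ (i : ℕ) < k then σ i else 0).submatrix id (Fin.castLE hkd), ?_⟩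
      rw [hAk, hVk, Matrix.mul_assoc, Matrix.mul_assoc,
        Matrix.mul_transpose_eq_submatrix_mul_transpose_submatrix hc]
      intro i j hj
      rw [Matrix.of_apply, if_neg]
      rintro ⟨hij, hik⟩
      exact hj ⟨⟨j, hij ▸ hik⟩, rfl⟩
    rw [hM, Matrix.mul_assoc M, hVV, Matrix.mul_one]
  have hBP : Vkᵀ * R * P = 1 :=
    Matrix.mul_eq_one_of_mul_mul_self_of_rank_eq_card _ P (by simpa using hrank) hP.1
  rw [Matrix.sub_mul_mul_mul_transpose_eq_of_mul_eq_one A Ak Vk R P hAkV hBP, frobNorm_neg]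
  calc _ ≤ frobNorm ((A - Ak) * R * Rᵀ * Vk * Vkᵀ)
          + frobNorm ((A - Ak) * R * (P - (Vkᵀ * R)ᵀ) * Vkᵀ) := frobNorm_add_le _ _
    _ = frobNorm ((A - Ak) * R * Rᵀ * Vk) + frobNorm ((A - Ak) * R * (P - (Vkᵀ * R)ᵀ)) := by
        rw [frobNorm_mul_transpose_of_transpose_mul_self _ hVV,
          frobNorm_mul_transpose_of_transpose_mul_self _ hVV]
    _ ≤ _ := add_le_add le_rfl (frobNorm_mul_le_mul_specNorm _ _)
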